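/- arXiv:1512.03004 — 2 statements merged into one kernel-verified Lean document; each statement's English description precedes it below -/
import Mathlib

section
/- Let V be a finite-dimensional vector space over an algebraically closed field of characteristic zero and φ ∈ GL(V). Write φ = s·u = u·s for its multiplicative Jordan decomposition with s diagonalizable and u unipotent. If N ∈ End(V) is nilpotent with φ N φ^{-1} = c·N for a scalar c, then s N s^{-1} = c·N and u N u^{-1} = N. -/
/-!
On `End V` consider the operator `X ↦ a X - c X a`. The hypothesis `φ N = c N φ` says that `N`
lies in its kernel for `a = φ`. For `a = s` this operator is semisimple, commutes with the one
for `a = φ`, and differs from it by the operator attached to the nilpotent `φ - s`; so it is the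
semisimple part of the latter and kills its kernel, i.e. `s N = c N s`. Comparing with
`s u N = c N s u` and cancelling the invertible `s` gives `u N = N u`.
-/

open LinearMap Module

namespace LinearMap

variable {R A : Type*} [CommRing R] [Ring A] [Algebra R A]

def twistedAd (c : R) (a : A) : End R A :=
  mulLeft R a - c • mulRight R a

theorem twistedAd_apply (c : R) (a X : A) : twistedAd c a X = a * X - c • (X * a) := rfl

theorem twistedAd_sub (c : R) (a b : A) :
    twistedAd c (a - b) = twistedAd c a - twistedAd c b := by
  ext X
  simp only [twistedAd_apply, LinearMap.sub_apply, sub_mul, mul_sub, smul_sub]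
  abel

theorem commute_mulLeft_mulLeft {a b : A} (h : Commute a b) :
    Commute (mulLeft R a) (mulLeft R b) := by
  ext X
  simp only [Module.End.mul_apply, mulLeft_apply, ← mul_assoc, h.eq]

theorem commute_mulRight_mulRight {a b : A} (h : Commute a b) :
    Commute (mulRight R a) (mulRight R b) := by
  ext X
  simp only [Module.End.mul_apply, mulRight_apply, mul_assoc, h.eq]

theorem commute_twistedAd {a b : A} (h : Commute a b) (c : R) :
    Commute (twistedAd c a) (twistedAd c b) := by
  unfold twistedAd
  refine .sub_left (.sub_right (commute_mulLeft_mulLeft h) ?_) (.sub_right ?_ ?_)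
  · exact (commute_mulLeft_right a b).smul_right c
  · exact (commute_mulLeft_right b a).symm.smul_left c
  · exact ((commute_mulRight_mulRight h).smul_left c).smul_right c

theorem isNilpotent_twistedAd {a : A} (ha : IsNilpotent a) (c : R) :
    IsNilpotent (twistedAd c a) :=
  ((commute_mulLeft_right a a).smul_right c).isNilpotent_sub
    ((isNilpotent_mulLeft_iff R a).mpr ha) (((isNilpotent_mulRight_iff R a).mpr ha).smul c)

end LinearMap

namespace Module.End

variable {K V : Type*} [Field K] [AddCommGroup V] [Module K V] [FiniteDimensional K V]

theorem IsSemisimple.mulLeft {a : End K V} (ha : a.IsSemisimple) :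
    IsSemisimple (LinearMap.mulLeft K a) := by
  refine isSemisimple_of_squarefree_aeval_eq_zero ha.minpoly_squarefree ?_
  change Polynomial.aeval (Algebra.lmul K (End K V) a) (minpoly K a) = 0
  rw [Polynomial.aeval_algHom_apply, minpoly.aeval, map_zero]

theorem IsSemisimple.mulRight {a : End K V} (ha : a.IsSemisimple) :
    IsSemisimple (LinearMap.mulRight K a) := by
  refine isSemisimple_of_squarefree_aeval_eq_zero ha.minpoly_squarefree ?_
  -- right multiplication by `a` is left multiplication by `op a` in the opposite algebra
  have hop : LinearMap.mulRight K a = Algebra.lsmul K K (End K V) (MulOpposite.op a) := by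
    ext
    simp [Algebra.lsmul]
  rw [hop, Polynomial.aeval_algHom_apply, Polynomial.aeval_op_apply, minpoly.aeval,
    MulOpposite.op_zero, map_zero]

theorem IsSemisimple.twistedAd [PerfectField K] {a : End K V} (ha : a.IsSemisimple) (c : K) :
    (twistedAd c a).IsSemisimple :=
  .of_mem_adjoin_pair (commute_mulLeft_right a a) ha.mulLeft ha.mulRight <|
    sub_mem (Algebra.subset_adjoin <| .inl rfl)
      (Subalgebra.smul_mem _ (Algebra.subset_adjoin <| .inr rfl) c)

theorem mul_eq_smul_mul_of_isSemisimple_of_isNilpotent_sub [PerfectField K]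
    {φ s N : End K V} {c : K} (hs : s.IsSemisimple) (hφs : Commute φ s)
    (hnil : IsNilpotent (φ - s)) (hrel : φ * N = c • (N * φ)) :
    s * N = c • (N * s) := by
  have hker : N ∈ (twistedAd c φ).genEigenspace 0 1 := by
    rw [mem_genEigenspace_one, zero_smul, twistedAd_apply, hrel, sub_self]
  have hs_ker := apply_eq_of_mem_of_comm_of_isFinitelySemisimple_of_isNil hker
    (commute_twistedAd hφs c) (hs.twistedAd c).isFinitelySemisimple
    (twistedAd_sub c φ s ▸ isNilpotent_twistedAd hnil c)
  rwa [twistedAd_apply, zero_smul, sub_eq_zero] at hs_ker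

end Module.End

theorem stmt_8_general {k : Type*} [Field k] [CharZero k]
    {V : Type*} [AddCommGroup V] [Module k V] [FiniteDimensional k V]
    (φ s u : Module.End k V) (hφ : IsUnit φ)
    (hdec : φ = s * u) (hcomm : s * u = u * s)
    (hs : s.IsSemisimple) (hu : IsNilpotent (u - 1))
    (N : Module.End k V)
    (c : k) (hrel : φ * N = c • (N * φ)) :
    s * N = c • (N * s) ∧ u * N = N * u := by
  have hsu : Commute s u := hcomm
  have hφs : Commute φ s := hdec ▸ (Commute.refl s).mul_left hsu.symm
  have hnil : IsNilpotent (φ - s) := by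
    rw [hdec, ← mul_sub_one]
    exact hsu.sub_right (Commute.one_right s) |>.isNilpotent_mul_left hu
  have hsN := Module.End.mul_eq_smul_mul_of_isSemisimple_of_isNilpotent_sub hs hφs hnil hrel
  refine ⟨hsN, ?_⟩
  have hs_unit : IsUnit s := (hsu.isUnit_mul_iff.mp (hdec ▸ hφ)).1
  apply hs_unit.mul_left_cancel
  calc s * (u * N) = φ * N := by rw [hdec, mul_assoc]
    _ = s * (N * u) := by rw [hrel, hdec, ← mul_assoc, ← smul_mul_assoc, ← hsN, mul_assoc]

/-- if `φ = s·u = u·s` is the multiplicative Jordan decomposition of an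
invertible endomorphism of a finite-dimensional space over an algebraically closed field of
characteristic zero (`s` semisimple, `u` unipotent), and `N` is nilpotent with
`φ N φ⁻¹ = c·N`, then `s N s⁻¹ = c·N` and `u N u⁻¹ = N`. -/
theorem stmt_8 {k : Type*} [Field k] [IsAlgClosed k] [CharZero k]
    {V : Type*} [AddCommGroup V] [Module k V] [FiniteDimensional k V]
    (φ s u : Module.End k V) (hφ : IsUnit φ)
    (hdec : φ = s * u) (hcomm : s * u = u * s)
    (hs : s.IsSemisimple) (hu : IsNilpotent (u - 1))
    (N : Module.End k V) (hN : IsNilpotent N)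
    (c : k) (hc : c ≠ 0) (hrel : φ * N = c • (N * φ)) :
    s * N = c • (N * s) ∧ u * N = N * u :=
  stmt_8_general φ s u hφ hdec hcomm hs hu N c hrel
end

section
/- Let (r, V, N) be a Weil–Deligne representation of a group W over a field L of characteristic zero containing all eigenvalues of r(φ) for a fixed element φ with v(φ) = 1, where W is generated by φ and the kernel I of v. Let r(φ) = r(φ)^{ss} u be the multiplicative Jordan decomposition with u unipotent, and define r̃(σ) = r(σ) u^{-v(σ)}. Then r̃ : W → GL(V) is a group homomorphism, provided u commutes with r(τ) for all τ ∈ I. -/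
/-- Frobenius-semisimplification is multiplicative.  Let `v : W → ℤ` be a
surjective homomorphism with kernel `I`, `φ ∈ W` with `v φ = 1`, and suppose `W` is
generated by `φ` and `I`.  Let `r` be a representation of `W` on a finite-dimensional
vector space `V` over a field `L` of characteristic zero, and let `r φ = s · u` be the
multiplicative Jordan decomposition of `r φ` (with `u` unipotent, commuting with `r φ`).
If `u` commutes with `r τ` for every `τ ∈ I`, then `σ ↦ r σ * u^{-v σ}` is a group
homomorphism. -/
theorem stmt_9 {L : Type*} [Field L] [CharZero L]
    {V : Type*} [AddCommGroup V] [Module L V] [FiniteDimensional L V]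
    {W : Type*} [Group W] (v : W → ℤ) (hv : ∀ σ τ : W, v (σ * τ) = v σ + v τ)
    (hvsurj : Function.Surjective v)
    (φ : W) (hφ : v φ = 1)
    (hgen : Subgroup.closure ({φ} ∪ {τ : W | v τ = 0}) = ⊤)
    (r : W →* (V →ₗ[L] V)ˣ)
    (s u : (V →ₗ[L] V)ˣ)
    (hdec : r φ = s * u) (hscomm : s * u = u * s)
    (hss : Module.End.IsSemisimple (s : V →ₗ[L] V))
    (hu : IsNilpotent ((u : V →ₗ[L] V) - 1))
    (huφ : Commute u (r φ))
    (hcomm : ∀ τ : W, v τ = 0 → Commute u (r τ)) :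
    ∀ σ τ : W,
      r (σ * τ) * u ^ (-v (σ * τ)) = (r σ * u ^ (-v σ)) * (r τ * u ^ (-v τ)) := by
  have key : ∀ σ : W, Commute u (r σ) := by
    intro σ
    have hσ : σ ∈ Subgroup.closure ({φ} ∪ {τ : W | v τ = 0}) := by
      rw [hgen]; trivial
    induction hσ using Subgroup.closure_induction with
    | mem x hx =>
      rcases hx with hx | hx
      · rw [Set.mem_singleton_iff] at hx; subst hx; exact huφ
      · exact hcomm x hx
    | one => simp [Commute.one_right]
    | mul x y _ _ hx hy => rw [map_mul]; exact hx.mul_right hy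
    | inv x _ hx => rw [map_inv]; exact hx.inv_right
  intro σ τ
  have h1 : Commute (u ^ (-v σ)) (r τ) := (key τ).zpow_left _
  rw [map_mul, hv, neg_add, zpow_add]
  rw [mul_assoc, mul_assoc, ← mul_assoc (u ^ (-v σ)), h1.eq, mul_assoc]
end
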